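/- arXiv:1004.3755 — 2 statements merged into one kernel-verified Lean document; each statement's English description precedes it below -/
import Mathlib

section
/- Let G = [ (I_M ⊗ X^{-1}V)_J,: | ((S ⊗ I_T) D(V))_{J, 2..T} ] be the (T−1+Q²)×(T−1+Q²) matrix from Eq. (11), where X is diagonal invertible, S ∈ ℂ^{Q×Q} invertible, V ∈ ℂ^{T×Q} with first Q+1 rows Ṽ having every Q rows linearly independent, and Σ_q S_{1q}V_{jq} ≠ 0 for all j ∈ {Q+2,…,T}. Then det G ≠ 0. -/
open Matrix Kronecker

/-- The stacking operator `D`. -/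
def Dstack {T Q : ℕ} (V : Matrix (Fin T) (Fin Q) ℂ) :
    Matrix (Fin Q × Fin T) (Fin T) ℂ :=
  fun p k => if p.2 = k then V p.2 p.1 else 0

/-- The matrix `G = [ (I_Q ⊗ X⁻¹V)_{J,:} | ((S ⊗ I_T) D(V))_{J,2..T} ]` of Eq. (11)
has nonzero determinant whenever `X` is diagonal invertible, `S` is invertible, every
`Q` rows of the first `Q+1` rows of `V` are linearly independent, and
`Σ_q S_{1q} V_{jq} ≠ 0` for all `j ∈ {Q+2,…,T}` (stated for any identification `e` of
the equinumerous row and column index sets). -/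
theorem stmt13 (T Q : ℕ) (hQ : 0 < Q) (hT : Q < T)
    (x : Fin T → ℂ) (hx : ∀ i, x i ≠ 0)
    (S : Matrix (Fin Q) (Fin Q) ℂ) (hS : IsUnit S)
    (V : Matrix (Fin T) (Fin Q) ℂ)
    (hVt : ∀ i : Fin (Q + 1),
      IsUnit ((V.submatrix (Fin.castLE hT) id).submatrix i.succAbove id))
    (hsum : ∀ j : Fin T, Q + 1 ≤ (j : ℕ) →
      (∑ q, S ⟨0, hQ⟩ q * V j q) ≠ 0) :
    letI G : Matrix { p : Fin Q × Fin T // (p.1 : ℕ) = 0 ∨ (p.2 : ℕ) ≤ Q }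
        ((Fin Q × Fin Q) ⊕ { t : Fin T // (t : ℕ) ≠ 0 }) ℂ :=
      Matrix.fromCols
        (fun j p => ((1 : Matrix (Fin Q) (Fin Q) ℂ) ⊗ₖ
          ((Matrix.diagonal x)⁻¹ * V)) j.val p)
        (fun j t => ((S ⊗ₖ (1 : Matrix (Fin T) (Fin T) ℂ)) * Dstack V) j.val t.val)
    ∀ e : ((Fin Q × Fin Q) ⊕ { t : Fin T // (t : ℕ) ≠ 0 }) ≃
        { p : Fin Q × Fin T // (p.1 : ℕ) = 0 ∨ (p.2 : ℕ) ≤ Q },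
      (G.submatrix e id).det ≠ 0 := by
  intro e hdet
  obtain ⟨v, hv, hGv⟩ := Matrix.exists_mulVec_eq_zero_iff.mpr hdet
  refine hv ?_
  -- abbreviations
  have hQT : Q + 1 ≤ T := hT
  set κ : Fin (Q + 1) → Fin T := Fin.castLE hT with hκ
  set Vt : Matrix (Fin (Q + 1)) (Fin Q) ℂ := V.submatrix (Fin.castLE hT) id with hVtdef
  set w : Matrix (Fin Q) (Fin Q) ℂ := fun i b => v (Sum.inl (i, b)) with hwdef
  set u : Fin T → ℂ := fun t => if h : (t : ℕ) ≠ 0 then v (Sum.inr ⟨t, h⟩) else 0 with hudef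
  -- row equations
  have hrow : ∀ j : { p : Fin Q × Fin T // (p.1 : ℕ) = 0 ∨ (p.2 : ℕ) ≤ Q },
      (∑ p : Fin Q × Fin Q, ((1 : Matrix (Fin Q) (Fin Q) ℂ) ⊗ₖ
          ((Matrix.diagonal x)⁻¹ * V)) j.val p * v (Sum.inl p))
        + (∑ t : { t : Fin T // (t : ℕ) ≠ 0 },
            ((S ⊗ₖ (1 : Matrix (Fin T) (Fin T) ℂ)) * Dstack V) j.val t.val * v (Sum.inr t))
        = 0 := by
    intro j
    have h := congrFun hGv (e.symm j)
    simpa [Matrix.mulVec, dotProduct, Matrix.submatrix_apply, Fintype.sum_sum_type,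
      Matrix.fromCols_apply_inl, Matrix.fromCols_apply_inr, Matrix.fromCols, Matrix.of_apply] using h
  -- the inverse of the diagonal matrix
  have hdiag : (Matrix.diagonal x)⁻¹ = Matrix.diagonal (fun t => (x t)⁻¹) := by
    apply Matrix.inv_eq_right_inv
    rw [Matrix.diagonal_mul_diagonal]
    convert Matrix.diagonal_one using 2
    funext t
    exact mul_inv_cancel₀ (hx t)
  -- right block entries
  have hGr : ∀ (i : Fin Q) (j t : Fin T),
      ((S ⊗ₖ (1 : Matrix (Fin T) (Fin T) ℂ)) * Dstack V) (i, j) t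
        = if j = t then (∑ a, S i a * V j a) else 0 := by
    intro i j t
    rw [Matrix.mul_apply, Fintype.sum_prod_type]
    simp only [Matrix.kroneckerMap_apply, Dstack, Matrix.one_apply]
    by_cases hjt : j = t
    · subst hjt
      simp [Finset.mul_sum]
    · rw [if_neg hjt]
      apply Finset.sum_eq_zero; intro a _
      apply Finset.sum_eq_zero; intro b _
      by_cases hbt : b = t
      · subst hbt
        rw [if_neg hjt]
        ring
      · rw [if_neg hbt]
        ring
  -- key scalar equation
  have key : ∀ (i : Fin Q) (j : Fin T), ((i : ℕ) = 0 ∨ (j : ℕ) ≤ Q) →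
      ∑ b, V j b * w i b = -(x j * u j) * ∑ a, S i a * V j a := by
    intro i j hij
    have h1 := hrow ⟨(i, j), hij⟩
    have hL : ∑ p : Fin Q × Fin Q, ((1 : Matrix (Fin Q) (Fin Q) ℂ) ⊗ₖ
        ((Matrix.diagonal x)⁻¹ * V)) (i, j) p * v (Sum.inl p)
        = (x j)⁻¹ * ∑ b, V j b * w i b := by
      rw [Fintype.sum_prod_type, Finset.mul_sum]
      rw [Finset.sum_eq_single i]
      · refine Finset.sum_congr rfl fun b _ => ?_
        simp only [Matrix.kroneckerMap_apply, Matrix.one_apply_eq, hdiag,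
          Matrix.diagonal_mul, hwdef]
        ring
      · intro a _ ha
        apply Finset.sum_eq_zero; intro b _
        simp only [Matrix.kroneckerMap_apply, Matrix.one_apply_ne (Ne.symm ha), zero_mul]
      · intro h; exact absurd (Finset.mem_univ i) h
    have hR : ∑ t : { t : Fin T // (t : ℕ) ≠ 0 },
        ((S ⊗ₖ (1 : Matrix (Fin T) (Fin T) ℂ)) * Dstack V) (i, j) t.val * v (Sum.inr t)
        = (∑ a, S i a * V j a) * u j := by
      simp only [hGr]
      by_cases hj0 : (j : ℕ) ≠ 0
      · rw [Fintype.sum_eq_single (⟨j, hj0⟩ : { t : Fin T // (t : ℕ) ≠ 0 })]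
        · rw [if_pos rfl, hudef]
          simp [hj0]
        · intro t ht
          rw [if_neg, zero_mul]
          intro hjt
          exact ht (Subtype.ext hjt.symm)
      · push_neg at hj0
        have huj : u j = 0 := by rw [hudef]; simp [hj0]
        rw [huj, mul_zero]
        apply Finset.sum_eq_zero; intro t _
        rw [if_neg, zero_mul]
        intro hjt
        exact t.prop (by rw [← hjt, hj0])
    rw [hL, hR] at h1
    have hxj := hx j
    field_simp at h1
    linear_combination h1
  -- μ, and its vanishing at 0
  set μ : Fin (Q + 1) → ℂ := fun j' => -(x (κ j') * u (κ j')) with hμdef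
  have hκ0 : ((κ 0 : Fin T) : ℕ) = 0 := rfl
  have hu0 : u (κ 0) = 0 := by
    rw [hudef]; simp [hκ0]
  have hμ0 : μ 0 = 0 := by rw [hμdef]; simp [hu0]
  have key' : ∀ (i : Fin Q) (j' : Fin (Q + 1)),
      ∑ b, Vt j' b * w i b = μ j' * ∑ a, S i a * Vt j' a := by
    intro i j'
    have hle : ((κ j' : Fin T) : ℕ) ≤ Q := Nat.lt_succ_iff.mp j'.isLt
    have h := key i (κ j') (Or.inr hle)
    show ∑ b, V (Fin.castLE hT j') b * w i b = μ j' * ∑ a, S i a * V (Fin.castLE hT j') a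
    rw [hμdef]
    rw [show κ j' = Fin.castLE hT j' from rfl] at h
    rw [h]
  -- the matrix B of rows 1..Q of Vt
  set B : Matrix (Fin Q) (Fin Q) ℂ := Vt.submatrix Fin.succ id with hBdef
  have hBu : IsUnit B := by
    have h := hVt 0
    have : (0 : Fin (Q + 1)).succAbove = Fin.succ := by
      funext m; exact Fin.zero_succAbove m
    rwa [this] at h
  have hBdet : IsUnit B.det := (Matrix.isUnit_iff_isUnit_det B).mp hBu
  have hBi : B⁻¹ * B = 1 := Matrix.nonsing_inv_mul _ hBdet
  set c : Fin Q → ℂ := Matrix.vecMul (Vt 0) B⁻¹ with hcdef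
  have hcB : Matrix.vecMul c B = Vt 0 := by
    rw [hcdef, Matrix.vecMul_vecMul, hBi, Matrix.vecMul_one]
  have hcB' : ∀ b, ∑ j, c j * Vt j.succ b = Vt 0 b := by
    intro b
    have := congrFun hcB b
    simpa [Matrix.vecMul, dotProduct, hBdef, Matrix.submatrix_apply] using this
  -- row-0 relation
  have h0 : ∀ i, ∑ b, Vt 0 b * w i b = 0 := by
    intro i
    rw [key' i 0, hμ0, zero_mul]
  -- z = 0
  set z : Fin Q → ℂ := fun j => c j * μ j.succ with hzdef
  have hzM : Matrix.vecMul z (B * S.transpose) = 0 := by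
    funext i
    have expand : Matrix.vecMul z (B * S.transpose) i
        = ∑ j, c j * (μ j.succ * ∑ a, S i a * Vt j.succ a) := by
      rw [Matrix.vecMul, dotProduct]
      refine Finset.sum_congr rfl fun j _ => ?_
      rw [Matrix.mul_apply]
      simp only [hzdef, hBdef, Matrix.submatrix_apply, Matrix.transpose_apply, id]
      have hc : ∑ a, Vt j.succ a * S i a = ∑ a, S i a * Vt j.succ a :=
        Finset.sum_congr rfl fun a _ => mul_comm _ _
      rw [hc]
      ring
    rw [expand]
    have : ∑ j, c j * (μ j.succ * ∑ a, S i a * Vt j.succ a)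
        = ∑ j, c j * ∑ b, Vt j.succ b * w i b := by
      refine Finset.sum_congr rfl fun j _ => ?_
      rw [key' i j.succ]
    rw [this]
    have swap : ∑ j, c j * ∑ b, Vt j.succ b * w i b
        = ∑ b, (∑ j, c j * Vt j.succ b) * w i b := by
      calc ∑ j, c j * ∑ b, Vt j.succ b * w i b
          = ∑ j, ∑ b, c j * Vt j.succ b * w i b := by
            refine Finset.sum_congr rfl fun j _ => ?_
            rw [Finset.mul_sum]
            exact Finset.sum_congr rfl fun b _ => by ring
        _ = ∑ b, ∑ j, c j * Vt j.succ b * w i b := Finset.sum_comm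
        _ = ∑ b, (∑ j, c j * Vt j.succ b) * w i b := by
            refine Finset.sum_congr rfl fun b _ => ?_
            rw [Finset.sum_mul]
    rw [swap]
    simp only [hcB']
    simpa using h0 i
  have hSTdet : IsUnit (B * S.transpose).det := by
    rw [Matrix.det_mul, Matrix.det_transpose]
    exact hBdet.mul ((Matrix.isUnit_iff_isUnit_det S).mp hS)
  have hz0 : z = 0 := by
    have h1 : z = Matrix.vecMul (Matrix.vecMul z (B * S.transpose)) (B * S.transpose)⁻¹ := by
      rw [Matrix.vecMul_vecMul, Matrix.mul_nonsing_inv _ hSTdet, Matrix.vecMul_one]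
    rw [h1, hzM, Matrix.zero_vecMul]
  have hcmu : ∀ j : Fin Q, c j * μ j.succ = 0 := fun j => congrFun hz0 j
  -- every c k is nonzero
  have hck : ∀ k : Fin Q, c k ≠ 0 := by
    intro k hk
    set y' : Fin (Q + 1) → ℂ := Fin.cons 1 (fun j => -(c j)) with hy'def
    have hy'V : ∀ b, ∑ j', y' j' * Vt j' b = 0 := by
      intro b
      rw [Fin.sum_univ_succ]
      simp only [hy'def, Fin.cons_zero, Fin.cons_succ, one_mul, neg_mul]
      rw [Finset.sum_neg_distrib, hcB' b]
      ring
    set y : Fin Q → ℂ := fun m => y' ((k.succ).succAbove m) with hydef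
    have hyM : Matrix.vecMul y (Vt.submatrix (k.succ).succAbove id) = 0 := by
      funext b
      rw [Matrix.vecMul, dotProduct]
      simp only [hydef, Matrix.submatrix_apply, id]
      have := Fin.sum_univ_succAbove (fun j' => y' j' * Vt j' b) k.succ
      have h2 : ∑ m, y' (k.succ.succAbove m) * Vt (k.succ.succAbove m) b
          = (∑ j', y' j' * Vt j' b) - y' k.succ * Vt k.succ b := by
        rw [this]; ring
      rw [h2, hy'V b]
      simp [hy'def, Fin.cons_succ, hk]
    have hMkdet : IsUnit (Vt.submatrix (k.succ).succAbove id).det :=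
      (Matrix.isUnit_iff_isUnit_det _).mp (hVt k.succ)
    have hy0 : y = 0 := by
      have h1 : y = Matrix.vecMul (Matrix.vecMul y (Vt.submatrix (k.succ).succAbove id))
          (Vt.submatrix (k.succ).succAbove id)⁻¹ := by
        rw [Matrix.vecMul_vecMul, Matrix.mul_nonsing_inv _ hMkdet, Matrix.vecMul_one]
      rw [h1, hyM, Matrix.zero_vecMul]
    have : y ⟨0, hQ⟩ = 1 := by
      have h00 : (Fin.castSucc (⟨0, hQ⟩ : Fin Q) : Fin (Q + 1)) = 0 := Fin.ext rfl
      show y' (k.succ.succAbove ⟨0, hQ⟩) = 1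
      rw [Fin.succAbove_of_castSucc_lt _ _ (by rw [h00]; exact Fin.succ_pos k), h00,
        hy'def, Fin.cons_zero]
    rw [hy0] at this
    exact one_ne_zero this.symm
  have hμsucc : ∀ k : Fin Q, μ k.succ = 0 := by
    intro k
    rcases mul_eq_zero.mp (hcmu k) with h | h
    · exact absurd h (hck k)
    · exact h
  have hμall : ∀ j', μ j' = 0 := by
    intro j'
    refine Fin.cases hμ0 hμsucc j'
  -- w = 0
  have hw0 : ∀ i b, w i b = 0 := by
    intro i
    have hBw : B.mulVec (fun b => w i b) = 0 := by
      funext j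
      rw [Matrix.mulVec, dotProduct]
      simp only [hBdef, Matrix.submatrix_apply, id]
      rw [show ∑ b, Vt j.succ b * w i b = μ j.succ * ∑ a, S i a * Vt j.succ a from key' i j.succ,
        hμsucc j, zero_mul]
      simp
    have : (fun b => w i b) = 0 := by
      have h1 : (fun b => w i b) = (B⁻¹ * B).mulVec (fun b => w i b) := by
        rw [hBi, Matrix.one_mulVec]
      rw [h1, ← Matrix.mulVec_mulVec, hBw, Matrix.mulVec_zero]
    exact fun b => congrFun this b
  -- u = 0
  have hu0' : ∀ t : Fin T, u t = 0 := by
    intro t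
    by_cases ht : (t : ℕ) ≤ Q
    · have hlt : (t : ℕ) < Q + 1 := Nat.lt_succ_of_le ht
      have hκt : κ ⟨(t : ℕ), hlt⟩ = t := by
        rw [hκ]; exact Fin.ext rfl
      have := hμall ⟨(t : ℕ), hlt⟩
      rw [hμdef] at this
      simp only [hκt, neg_eq_zero] at this
      rcases mul_eq_zero.mp this with h | h
      · exact absurd h (hx t)
      · exact h
    · push_neg at ht
      have hge : Q + 1 ≤ (t : ℕ) := ht
      have hk := key ⟨0, hQ⟩ t (Or.inl rfl)
      simp only [hw0, mul_zero, Finset.sum_const_zero] at hk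
      have := (mul_eq_zero.mp hk.symm).resolve_right (hsum t hge)
      rw [neg_eq_zero] at this
      rcases mul_eq_zero.mp this with h | h
      · exact absurd h (hx t)
      · exact h
  -- conclude v = 0
  funext cc
  rcases cc with p | ⟨t, htne⟩
  · exact hw0 p.1 p.2
  · have := hu0' t
    rw [hudef] at this
    simpa [dif_pos htne] using this
end

section
/- Expanding the determinant of the (T−1+Q²)×(T−1+Q²) matrix [ (I_Q ⊗ XV)_{J,:} | ((S ⊗ I_T)D(V))_{J,2..T} ] along the last T−Q−1 columns (each of which has exactly one nonzero entry, in rows indexed by {Q+2,…,T} of the first block) yields |det| = Π_{j=Q+2}^{T} |Σ_{q=1}^{Q} S_{1q} V_{jq}| · |det E|, where E = [ I_Q ⊗ X̃Ṽ | (S ⊗ I_{Q+1}) D(Ṽ)_{:,2..Q+1} ]. -/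
open Matrix Kronecker

lemma abs_det_sub {m n : Type*} [Fintype m] [DecidableEq m] [Fintype n] [DecidableEq n]
    (N : Matrix m m ℂ) (f g : n ≃ m) :
    ‖(N.submatrix f g).det‖ = ‖N.det‖ := by
  rw [show N.submatrix f g = ((N.submatrix f f).submatrix id (g.trans f.symm)) by
    ext i j; simp [Matrix.submatrix_apply]]
  rw [Matrix.det_permute', Matrix.det_submatrix_equiv_self, norm_mul]
  rcases Int.units_eq_one_or (Equiv.Perm.sign (g.trans f.symm)) with h | h <;>
    simp [h]

lemma keyT {T Q : ℕ} (S : Matrix (Fin Q) (Fin Q) ℂ) (V : Matrix (Fin T) (Fin Q) ℂ)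
    (q : Fin Q) (t t' : Fin T) :
    ((S ⊗ₖ (1 : Matrix (Fin T) (Fin T) ℂ)) * Dstack V) (q, t) t'
      = if t = t' then ∑ a, S q a * V t a else 0 := by
  rw [Matrix.mul_apply, Fintype.sum_prod_type]
  simp only [Matrix.kroneckerMap_apply, Matrix.one_apply, Dstack, mul_ite, ite_mul,
    mul_zero, zero_mul, mul_one, Finset.sum_ite_eq, Finset.mem_univ, if_true]
  by_cases h : t = t' <;> simp [h]


/-- Iterated Laplace expansion (Eq. (13) of the paper): the absolute determinant of
`[ (I_Q ⊗ XV)_{J,:} | ((S ⊗ I_T)D(V))_{J,2..T} ]` equals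
`Π_{j=Q+2}^{T} |Σ_q S_{1q} V_{jq}|` times `|det E|`, where
`E = [ I_Q ⊗ X̃Ṽ | (S ⊗ I_{Q+1}) D(Ṽ)_{:,2..Q+1} ]` (stated for arbitrary
identifications `e`, `e'` of the equinumerous index sets; the absolute value of the
determinant does not depend on this choice). -/
theorem stmt14 (T Q : ℕ) (hQ : 0 < Q) (hT : Q + 1 < T)
    (x : Fin T → ℂ)
    (S : Matrix (Fin Q) (Fin Q) ℂ)
    (V : Matrix (Fin T) (Fin Q) ℂ) :
    letI Vt : Matrix (Fin (Q + 1)) (Fin Q) ℂ := V.submatrix (Fin.castLE hT.le) id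
    letI Xt : Matrix (Fin (Q + 1)) (Fin (Q + 1)) ℂ :=
      Matrix.diagonal (fun i : Fin (Q + 1) => x (Fin.castLE hT.le i))
    letI Dt : Matrix (Fin Q × Fin (Q + 1)) (Fin Q) ℂ := fun p k => Dstack Vt p k.succ
    letI E : Matrix (Fin Q × Fin (Q + 1)) ((Fin Q × Fin Q) ⊕ Fin Q) ℂ :=
      Matrix.fromCols ((1 : Matrix (Fin Q) (Fin Q) ℂ) ⊗ₖ (Xt * Vt))
        ((S ⊗ₖ (1 : Matrix (Fin (Q + 1)) (Fin (Q + 1)) ℂ)) * Dt)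
    letI G : Matrix { p : Fin Q × Fin T // (p.1 : ℕ) = 0 ∨ (p.2 : ℕ) ≤ Q }
        ((Fin Q × Fin Q) ⊕ { t : Fin T // (t : ℕ) ≠ 0 }) ℂ :=
      Matrix.fromCols
        (fun j p => ((1 : Matrix (Fin Q) (Fin Q) ℂ) ⊗ₖ
          (Matrix.diagonal x * V)) j.val p)
        (fun j t => ((S ⊗ₖ (1 : Matrix (Fin T) (Fin T) ℂ)) * Dstack V) j.val t.val)
    ∀ (e : ((Fin Q × Fin Q) ⊕ { t : Fin T // (t : ℕ) ≠ 0 }) ≃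
        { p : Fin Q × Fin T // (p.1 : ℕ) = 0 ∨ (p.2 : ℕ) ≤ Q })
      (e' : ((Fin Q × Fin Q) ⊕ Fin Q) ≃ (Fin Q × Fin (Q + 1))),
      ‖(G.submatrix e id).det‖ =
        (∏ j : { t : Fin T // Q + 1 ≤ (t : ℕ) },
          ‖∑ q, S ⟨0, hQ⟩ q * V j.val q‖) *
          ‖(E.submatrix e' id).det‖ := by
  intro e e'
  classical
  set Vt : Matrix (Fin (Q + 1)) (Fin Q) ℂ := V.submatrix (Fin.castLE hT.le) id with hVt
  set Xt : Matrix (Fin (Q + 1)) (Fin (Q + 1)) ℂ :=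
    Matrix.diagonal (fun i : Fin (Q + 1) => x (Fin.castLE hT.le i)) with hXt
  set Dt : Matrix (Fin Q × Fin (Q + 1)) (Fin Q) ℂ := fun p k => Dstack Vt p k.succ with hDt
  set E : Matrix (Fin Q × Fin (Q + 1)) ((Fin Q × Fin Q) ⊕ Fin Q) ℂ :=
    Matrix.fromCols ((1 : Matrix (Fin Q) (Fin Q) ℂ) ⊗ₖ (Xt * Vt))
      ((S ⊗ₖ (1 : Matrix (Fin (Q + 1)) (Fin (Q + 1)) ℂ)) * Dt) with hE
  set G : Matrix { p : Fin Q × Fin T // (p.1 : ℕ) = 0 ∨ (p.2 : ℕ) ≤ Q }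
      ((Fin Q × Fin Q) ⊕ { t : Fin T // (t : ℕ) ≠ 0 }) ℂ :=
    Matrix.fromCols
      (fun j p => ((1 : Matrix (Fin Q) (Fin Q) ℂ) ⊗ₖ
        (Matrix.diagonal x * V)) j.val p)
      (fun j t => ((S ⊗ₖ (1 : Matrix (Fin T) (Fin T) ℂ)) * Dstack V) j.val t.val) with hG
  set q0 : Fin Q := ⟨0, hQ⟩ with hq0
  -- row function
  let rf : ((Fin Q × Fin Q) ⊕ Fin Q) ⊕ { t : Fin T // Q + 1 ≤ (t : ℕ) }
      → { p : Fin Q × Fin T // (p.1 : ℕ) = 0 ∨ (p.2 : ℕ) ≤ Q } := fun i =>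
    match i with
    | Sum.inl c => ⟨((e' c).1, Fin.castLE hT.le (e' c).2),
        Or.inr (by have := (e' c).2.isLt; simp [Fin.castLE]; omega)⟩
    | Sum.inr t => ⟨(q0, t.val), Or.inl rfl⟩
  -- column function
  let cf : ((Fin Q × Fin Q) ⊕ Fin Q) ⊕ { t : Fin T // Q + 1 ≤ (t : ℕ) }
      → (Fin Q × Fin Q) ⊕ { t : Fin T // (t : ℕ) ≠ 0 } := fun i =>
    match i with
    | Sum.inl (Sum.inl ab) => Sum.inl ab
    | Sum.inl (Sum.inr k) => Sum.inr ⟨Fin.castLE hT.le k.succ, by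
        simp [Fin.castLE, Fin.ext_iff]⟩
    | Sum.inr t => Sum.inr ⟨t.val, by have := t.2; omega⟩
  have rfb : Function.Bijective rf := by
    constructor
    · rintro (c | t) (c' | t') h <;>
        simp only [rf, Subtype.ext_iff, Prod.ext_iff] at h
      · have h2 : (e' c).2 = (e' c').2 := Fin.ext (by
          have := congrArg Fin.val h.2; simpa using this)
        have : e' c = e' c' := Prod.ext h.1 h2
        exact congrArg Sum.inl (e'.injective this)
      · exfalso
        have h1 := (e' c).2.isLt
        have h2 := congrArg Fin.val h.2
        have h3 := t'.2
        simp at h2; omega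
      · exfalso
        have h1 := (e' c').2.isLt
        have h2 := congrArg Fin.val h.2
        have h3 := t.2
        simp at h2; omega
      · exact congrArg Sum.inr (Subtype.ext h.2)
    · rintro ⟨⟨q, t⟩, h⟩
      by_cases ht : (t : ℕ) ≤ Q
      · refine ⟨Sum.inl (e'.symm (q, ⟨t, by omega⟩)), ?_⟩
        simp only [rf, Equiv.apply_symm_apply]
        exact Subtype.ext (Prod.ext rfl (Fin.ext (by simp)))
      · have hq : q = q0 := Fin.ext (by
          rcases h with h | h
          · simpa [hq0] using h
          · exact absurd h ht)
        exact ⟨Sum.inr ⟨t, by omega⟩, by simp [rf, hq]⟩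
  have cfb : Function.Bijective cf := by
    constructor
    · rintro ((ab | k) | t) ((ab' | k') | t') h <;>
        simp only [cf, Sum.inl.injEq, Sum.inr.injEq, Subtype.ext_iff, reduceCtorEq] at h <;>
        try exact h.elim
      · simp [h]
      · refine congrArg (fun z => Sum.inl (Sum.inr z)) (Fin.ext ?_)
        have := congrArg Fin.val h; simpa using this
      · exfalso
        have h2 := congrArg Fin.val h; simp at h2
        have := t'.2; omega
      · exfalso
        have h2 := congrArg Fin.val h; simp at h2
        have := t.2; omega
      · exact congrArg Sum.inr (Subtype.ext (Fin.ext (congrArg Fin.val h)))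
    · rintro (ab | ⟨t, ht⟩)
      · exact ⟨Sum.inl (Sum.inl ab), rfl⟩
      · by_cases htQ : (t : ℕ) ≤ Q
        · refine ⟨Sum.inl (Sum.inr ⟨(t : ℕ) - 1, by omega⟩), ?_⟩
          simp only [cf]
          refine congrArg Sum.inr (Subtype.ext (Fin.ext ?_))
          simp
          omega
        · exact ⟨Sum.inr ⟨t, by omega⟩, rfl⟩
  let re := Equiv.ofBijective rf rfb
  let ce := Equiv.ofBijective cf cfb
  -- step 1: reduce to the canonical reindexing
  have step1 : ‖(G.submatrix e id).det‖
      = ‖(G.submatrix re ce).det‖ := by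
    rw [show G.submatrix re ce = (G.submatrix e id).submatrix (re.trans e.symm) ce by
      ext i j; simp [Matrix.submatrix_apply]]
    rw [abs_det_sub]
  -- step 2: block structure
  have step2 : G.submatrix re ce
      = Matrix.fromBlocks (E.submatrix e' id) 0
          (G.submatrix (fun t => re (Sum.inr t)) (fun c => ce (Sum.inl c)))
          (Matrix.diagonal fun t : { t : Fin T // Q + 1 ≤ (t : ℕ) } => ∑ a, S q0 a * V t.val a) := by
    ext i j
    rcases i with c | t <;> rcases j with c' | t'
    · -- top-left: equals E (e' c) c'
      show G (rf (Sum.inl c)) (cf (Sum.inl c')) = E (e' c) c'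
      rcases c' with ab | k
      · -- left block of E
        show ((1 : Matrix (Fin Q) (Fin Q) ℂ) ⊗ₖ (Matrix.diagonal x * V))
            ((e' c).1, Fin.castLE hT.le (e' c).2) ab
          = ((1 : Matrix (Fin Q) (Fin Q) ℂ) ⊗ₖ (Xt * Vt)) (e' c) ab
        simp only [Matrix.kroneckerMap_apply, Matrix.mul_apply, Xt, Vt,
          Matrix.diagonal_apply, Matrix.submatrix_apply, id_eq]
        congr 1
        rw [Finset.sum_eq_single (Fin.castLE hT.le (e' c).2),
          Finset.sum_eq_single (e' c).2]
        · simp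
        · intro b _ hb; simp [Fin.ext_iff] at hb ⊢; omega
        · simp
        · intro b _ hb
          have : ¬ (Fin.castLE hT.le (e' c).2 = b) := fun hh => hb hh.symm
          simp [this]
        · simp
      · -- right block of E
        show ((S ⊗ₖ (1 : Matrix (Fin T) (Fin T) ℂ)) * Dstack V)
            ((e' c).1, Fin.castLE hT.le (e' c).2) (Fin.castLE hT.le k.succ)
          = ((S ⊗ₖ (1 : Matrix (Fin (Q+1)) (Fin (Q+1)) ℂ)) * Dt) (e' c) k
        rw [keyT]
        have keyE : ((S ⊗ₖ (1 : Matrix (Fin (Q+1)) (Fin (Q+1)) ℂ)) * Dt) (e' c) k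
            = if (e' c).2 = k.succ then ∑ a, S (e' c).1 a * Vt (e' c).2 a else 0 := by
          rw [show ((e' c) : Fin Q × Fin (Q+1)) = ((e' c).1, (e' c).2) from rfl]
          rw [Matrix.mul_apply, Fintype.sum_prod_type]
          simp only [Dt, Matrix.kroneckerMap_apply, Matrix.one_apply, Dstack, mul_ite,
            ite_mul, mul_zero, zero_mul, mul_one, Finset.sum_ite_eq, Finset.mem_univ, if_true]
          by_cases h : (e' c).2 = k.succ <;> simp [h]
        rw [keyE]
        by_cases h : (e' c).2 = k.succ
        · simp [h, hVt]
        · rw [if_neg h, if_neg (by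
            intro hh; exact h (Fin.ext (by
              have := congrArg Fin.val hh; simpa [Fin.castLE] using this)))]
    · -- top-right: zero
      show G (rf (Sum.inl c)) (cf (Sum.inr t')) = 0
      show ((S ⊗ₖ (1 : Matrix (Fin T) (Fin T) ℂ)) * Dstack V)
          ((e' c).1, Fin.castLE hT.le (e' c).2) (⟨t'.val, _⟩ : {t : Fin T // (t:ℕ) ≠ 0}).val = 0
      rw [keyT]
      rw [if_neg]
      intro hh
      have := congrArg Fin.val hh
      have h1 := (e' c).2.isLt
      have h2 := t'.2
      simp [Fin.castLE] at this
      omega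
    · rfl
    · -- bottom-right: diagonal
      show G (rf (Sum.inr t)) (cf (Sum.inr t')) = _
      show ((S ⊗ₖ (1 : Matrix (Fin T) (Fin T) ℂ)) * Dstack V) (q0, t.val) t'.val = _
      rw [keyT]
      by_cases h : t = t'
      · simp [h, Matrix.diagonal_apply]
      · rw [if_neg (fun hh => h (Subtype.ext hh)), Matrix.fromBlocks_apply₂₂,
          Matrix.diagonal_apply_ne _ h]
  rw [step1, step2, Matrix.det_fromBlocks_zero₁₂, norm_mul, Matrix.det_diagonal,
    norm_prod, mul_comm]
end
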